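/- arXiv:1211.4139 — 5 statements merged into one kernel-verified Lean document; each statement's English description precedes it below -/
import Mathlib

section
/- The function y ↦ −y/tanh(y) + 1 is strictly decreasing on (0, ∞). Consequently, if 0 < a_min ≤ a ≤ a_max and κ > 0, then −κ/tanh(κ·a_max/2) + 2/a_max ≤ −κ/tanh(κ·a/2) + 2/a ≤ −κ/tanh(κ·a_min/2) + 2/a_min. -/
/-!
Write `coth = cosh / sinh`. Since `coth' = -1 / sinh²`, the derivative of `y coth y` is
`(sinh y cosh y - y) / sinh² y` and that of the Langevin function `coth y - 1/y` is
`1/y² - 1/sinh² y`; both are positive for `y > 0` because `y < sinh y` and `1 ≤ cosh y`.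
The first fact is the strict monotonicity claim. For the second, with `y = κa/2` one has
`-κ / tanh (κa/2) + 2/a = -κ (coth y - 1/y)`, so the expression decreases in `a`.
-/

open Real Set

lemma strictMonoOn_of_hasDerivAt_pos {D : Set ℝ} (hD : Convex ℝ D) {f f' : ℝ → ℝ}
    (hf : ∀ x ∈ D, HasDerivAt f (f' x) x) (hf' : ∀ x ∈ D, 0 < f' x) :
    StrictMonoOn f D :=
  strictMonoOn_of_hasDerivWithinAt_pos hD
    (continuousOn_of_forall_continuousAt fun x hx => (hf x hx).continuousAt)
    (fun x hx => (hf x (interior_subset hx)).hasDerivWithinAt)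
    (fun x hx => hf' x (interior_subset hx))

namespace Real

lemma div_tanh_eq_mul_cosh_div_sinh (x y : ℝ) : x / tanh y = x * (cosh y / sinh y) := by
  rw [tanh_eq_sinh_div_cosh, div_div_eq_mul_div, mul_div_assoc]

lemma hasDerivAt_cosh_div_sinh {y : ℝ} (hy : y ≠ 0) :
    HasDerivAt (fun y => cosh y / sinh y) (-1 / sinh y ^ 2) y := by
  refine ((hasDerivAt_cosh y).div (hasDerivAt_sinh y) (sinh_ne_zero.mpr hy)).congr_deriv ?_
  congr 1
  linear_combination -cosh_sq y

lemma strictMonoOn_mul_cosh_div_sinh :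
    StrictMonoOn (fun y => y * (cosh y / sinh y)) (Ioi 0) := by
  refine strictMonoOn_of_hasDerivAt_pos (convex_Ioi 0)
    (fun y hy => (hasDerivAt_id y).mul (hasDerivAt_cosh_div_sinh (ne_of_gt hy))) ?_
  intro y (hy : 0 < y)
  have hsinh : y < sinh y := self_lt_sinh_iff.mpr hy
  have hcosh : 1 ≤ cosh y := one_le_cosh y
  have hsinh_pos : 0 < sinh y := sinh_pos_iff.mpr hy
  have : 0 < (sinh y * cosh y - y) / sinh y ^ 2 := by
    apply div_pos _ (by positivity)
    nlinarith
  convert this using 1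
  simp only [id]
  field_simp
  ring

noncomputable def langevin (y : ℝ) : ℝ := cosh y / sinh y - y⁻¹

lemma strictMonoOn_langevin : StrictMonoOn langevin (Ioi 0) := by
  refine strictMonoOn_of_hasDerivAt_pos (convex_Ioi 0)
    (fun y hy => (hasDerivAt_cosh_div_sinh (ne_of_gt hy)).sub (hasDerivAt_inv (ne_of_gt hy))) ?_
  intro y (hy : 0 < y)
  have hsinh : y < sinh y := self_lt_sinh_iff.mpr hy
  have : (sinh y ^ 2)⁻¹ < (y ^ 2)⁻¹ := by gcongr
  simp only [neg_div, one_div, sub_neg_eq_add]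
  linarith

lemma neg_div_tanh_add_two_div_eq_langevin {κ : ℝ} (hκ : κ ≠ 0) (a : ℝ) :
    -κ / tanh (κ * a / 2) + 2 / a = -κ * langevin (κ * a / 2) := by
  have h : κ * (κ * a / 2)⁻¹ = 2 / a := by
    rw [inv_div, ← mul_div_assoc, mul_div_mul_left 2 a hκ]
  rw [neg_div, div_tanh_eq_mul_cosh_div_sinh, langevin, ← h]
  ring

lemma strictAntiOn_neg_div_tanh_add_two_div {κ : ℝ} (hκ : 0 < κ) :
    StrictAntiOn (fun a => -κ / tanh (κ * a / 2) + 2 / a) (Ioi 0) := by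
  intro b (hb : 0 < b) c (hc : 0 < c) hbc
  simp only [neg_div_tanh_add_two_div_eq_langevin hκ.ne']
  have hκb : κ * b / 2 ∈ Ioi 0 := by simp only [mem_Ioi]; positivity
  have hκc : κ * c / 2 ∈ Ioi 0 := by simp only [mem_Ioi]; positivity
  exact mul_lt_mul_of_neg_left (strictMonoOn_langevin hκb hκc (by gcongr)) (neg_neg_of_pos hκ)

end Real

theorem stmt5 :
    StrictAntiOn (fun y : ℝ => -y / Real.tanh y + 1) (Set.Ioi 0) ∧
    ∀ amin a amax κ : ℝ, 0 < amin → amin ≤ a → a ≤ amax → 0 < κ →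
      (-κ / Real.tanh (κ * amax / 2) + 2 / amax ≤ -κ / Real.tanh (κ * a / 2) + 2 / a ∧
       -κ / Real.tanh (κ * a / 2) + 2 / a ≤ -κ / Real.tanh (κ * amin / 2) + 2 / amin) := by
  refine ⟨fun x hx y hy hxy => ?_, fun amin a amax κ hamin hamin_le hle_amax hκ => ?_⟩
  · have := strictMonoOn_mul_cosh_div_sinh hx hy hxy
    simp only [neg_div, div_tanh_eq_mul_cosh_div_sinh]
    linarith
  · have ha : 0 < a := hamin.trans_le hamin_le
    have hanti := (strictAntiOn_neg_div_tanh_add_two_div hκ).antitoneOn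
    exact ⟨hanti ha (ha.trans_le hle_amax) hle_amax, hanti hamin ha hamin_le⟩
end

section
/- For every a > 0, the function κ ↦ κ/tanh(κa/2) − 2/a, extended by the value 0 at κ = 0, is continuous and strictly increasing on [0,∞), tends to +∞ as κ → ∞, and hence for every l > 0 the equation l = κ/tanh(κa/2) − 2/a has a unique solution κ = η(l,a) > 0. -/
/-!
With `x = κa/2` one has `etaFun a κ = (2/a) (x coth x - 1)`. The function `x coth x`, set to `1`
at `0`, is continuous, is at least `x`, and for `x > 0` has derivative
`(cosh x sinh x - x) / sinh² x = (sinh 2x - 2x) / (2 sinh² x) > 0`. So `etaFun a` is continuous,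
strictly increasing from `etaFun a 0 = 0` to `+∞` on `[0, ∞)`, and every `l > 0` is attained
exactly once, by the intermediate value theorem and injectivity.
-/

/-- The function κ ↦ κ/tanh(κa/2) − 2/a extended by 0 at κ = 0. -/
noncomputable def etaFun (a κ : ℝ) : ℝ :=
  if κ = 0 then 0 else κ / Real.tanh (κ * a / 2) - 2 / a

open Real Set Filter Topology

noncomputable def xCoth (x : ℝ) : ℝ :=
  if x = 0 then 1 else x * cosh x / sinh x

lemma xCoth_of_ne {x : ℝ} (hx : x ≠ 0) : xCoth x = x * cosh x / sinh x := if_neg hx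

/-- Writing `x coth x = cosh x / (sinh x / x)` with the difference quotient `dslope` removes the
singularity at `0`. -/
lemma xCoth_eq_cosh_div_dslope (x : ℝ) : xCoth x = cosh x / dslope sinh 0 x := by
  rcases eq_or_ne x 0 with rfl | hx
  · simp [xCoth]
  · rw [xCoth_of_ne hx, dslope_of_ne _ hx, slope_def_field, sinh_zero, sub_zero, sub_zero,
      div_div_eq_mul_div, mul_comm]

lemma dslope_sinh_zero_ne_zero (x : ℝ) : dslope sinh 0 x ≠ 0 := by
  rcases eq_or_ne x 0 with rfl | hx
  · simp
  · rw [dslope_of_ne _ hx, slope_def_field, sinh_zero, sub_zero, sub_zero]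
    exact div_ne_zero (sinh_ne_zero.mpr hx) hx

lemma continuous_xCoth : Continuous xCoth := by
  have hd : Continuous (dslope sinh 0) := by
    rw [← continuousOn_univ, continuousOn_dslope univ_mem, continuousOn_univ]
    exact ⟨continuous_sinh, differentiable_sinh 0⟩
  simp only [funext xCoth_eq_cosh_div_dslope]
  exact continuous_cosh.div hd dslope_sinh_zero_ne_zero

lemma hasDerivAt_xCoth {x : ℝ} (hx : x ≠ 0) :
    HasDerivAt xCoth ((cosh x * sinh x - x) / sinh x ^ 2) x := by
  have hs : sinh x ≠ 0 := sinh_ne_zero.mpr hx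
  have h := ((hasDerivAt_id' x).mul (hasDerivAt_cosh x)).div (hasDerivAt_sinh x) hs
  refine (h.congr_of_eventuallyEq ?_).congr_deriv ?_
  · filter_upwards [isOpen_ne.mem_nhds hx] with y hy using xCoth_of_ne hy
  · rw [Pi.mul_apply, div_left_inj' (pow_ne_zero 2 hs)]
    linear_combination (-x) * cosh_sq_sub_sinh_sq x

lemma strictMonoOn_xCoth : StrictMonoOn xCoth (Ici 0) := by
  refine strictMonoOn_of_deriv_pos (convex_Ici 0) continuous_xCoth.continuousOn fun x hx => ?_
  rw [interior_Ici, mem_Ioi] at hx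
  rw [(hasDerivAt_xCoth hx.ne').deriv]
  have hsinh : 2 * x < sinh (2 * x) := self_lt_sinh_iff.mpr (by linarith)
  rw [sinh_two_mul] at hsinh
  have : 0 < cosh x * sinh x - x := by linarith
  positivity

lemma self_le_xCoth {x : ℝ} (hx : 0 < x) : x ≤ xCoth x := by
  have hs : 0 < sinh x := sinh_pos_iff.mpr hx
  rw [xCoth_of_ne hx.ne', le_div_iff₀ hs]
  nlinarith [sinh_lt_cosh x]

lemma tendsto_xCoth_atTop : Tendsto xCoth atTop atTop :=
  tendsto_atTop_mono' atTop ((eventually_gt_atTop 0).mono fun _ => self_le_xCoth) tendsto_id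

lemma etaFun_eq_xCoth {a : ℝ} (ha : a ≠ 0) :
    etaFun a = fun κ => 2 / a * (xCoth (κ * a / 2) - 1) := by
  ext κ
  rcases eq_or_ne κ 0 with rfl | hκ
  · simp [etaFun, xCoth]
  · have hx : κ * a / 2 ≠ 0 := by positivity
    rw [etaFun, if_neg hκ, xCoth_of_ne hx, tanh_eq_sinh_div_cosh]
    field_simp

theorem stmt6 (a : ℝ) (ha : 0 < a) :
    ContinuousOn (etaFun a) (Set.Ici 0) ∧
    StrictMonoOn (etaFun a) (Set.Ici 0) ∧
    Filter.Tendsto (etaFun a) Filter.atTop Filter.atTop ∧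
    ∀ l : ℝ, 0 < l → ∃! κ : ℝ, 0 < κ ∧ l = κ / Real.tanh (κ * a / 2) - 2 / a := by
  have hcont : ContinuousOn (etaFun a) (Ici 0) := by
    rw [etaFun_eq_xCoth ha.ne']
    exact (continuous_const.mul
      ((continuous_xCoth.comp (by fun_prop)).sub continuous_const)).continuousOn
  have hmono : StrictMonoOn (etaFun a) (Ici 0) := by
    intro x hx y hy hxy
    rw [mem_Ici] at hx hy
    have := strictMonoOn_xCoth (by positivity : 0 ≤ x * a / 2) (by positivity : 0 ≤ y * a / 2)
      (by gcongr)
    simp only [etaFun_eq_xCoth ha.ne']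
    gcongr
  have htop : Tendsto (etaFun a) atTop atTop := by
    rw [etaFun_eq_xCoth ha.ne']
    refine Tendsto.const_mul_atTop (by positivity) (tendsto_atTop_add_const_right _ (-1) ?_)
    exact tendsto_xCoth_atTop.comp ((tendsto_id.atTop_mul_const ha).atTop_div_const two_pos)
  have hformula : ∀ κ, 0 < κ → etaFun a κ = κ / tanh (κ * a / 2) - 2 / a :=
    fun κ hκ => if_neg hκ.ne'
  refine ⟨hcont, hmono, htop, fun l hl => ?_⟩
  obtain ⟨κ, hκ, rfl⟩ := intermediate_value_Ioi hcont htop (by simpa [etaFun] using hl)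
  refine ⟨κ, ⟨hκ, hformula κ hκ⟩, fun κ' ⟨hκ', h⟩ =>
    hmono.injOn (mem_Ici_of_Ioi hκ') (mem_Ici_of_Ioi hκ) ?_⟩
  rw [hformula κ' hκ', ← h]
end

section
/- For every a > 0 and every l > 0, the unique positive solutions ν(l,a) of l = κ·tanh(κa/2) and η(l,a) of l = κ/tanh(κa/2) − 2/a satisfy ν(l,a) < η(l,a). -/
/-!
Put `t = κa/2`. Since `coth t - tanh t = 1 / (sinh t cosh t) = 2 / sinh 2t` and `sinh 2t > 2t`,
the curve `κ ↦ κ / tanh (κa/2) - 2/a` lies strictly below the increasing curve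
`κ ↦ κ tanh (κa/2)` on `κ > 0`. Hence `ν tanh (νa/2) = l = η / tanh (ηa/2) - 2/a < η tanh (ηa/2)`,
and monotonicity gives `ν < η`.
-/

open Real Set

namespace Real

theorem tanh_strictMono : StrictMono tanh := fun x y hxy =>
  lt_of_not_ge fun h => hxy.not_ge <| by
    simpa only [artanh_tanh] using artanh_le_artanh (neg_one_lt_tanh y) (tanh_lt_one x) h

theorem tanh_nonneg {x : ℝ} (hx : 0 ≤ x) : 0 ≤ tanh x := by
  simpa only [tanh_zero] using tanh_strictMono.monotone hx

theorem self_div_tanh_sub_one_lt_self_mul_tanh {t : ℝ} (ht : 0 < t) :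
    t / tanh t - 1 < t * tanh t := by
  have hs : 0 < sinh t := sinh_pos_iff.2 ht
  have hc : 0 < cosh t := cosh_pos t
  have hsc : t < sinh t * cosh t := by
    have := self_lt_sinh_iff.2 (by positivity : 0 < 2 * t)
    rw [sinh_two_mul] at this
    linarith
  have hdiff : t / tanh t - t * tanh t = t / (sinh t * cosh t) := by
    rw [tanh_eq_sinh_div_cosh]
    field_simp
    exact cosh_sq_sub_sinh_sq t
  have : t / (sinh t * cosh t) < 1 := (div_lt_one (by positivity)).2 hsc
  linarith

end Real

theorem div_tanh_sub_lt_mul_tanh {a κ : ℝ} (ha : 0 < a) (hκ : 0 < κ) :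
    κ / tanh (κ * a / 2) - 2 / a < κ * tanh (κ * a / 2) := by
  have key := self_div_tanh_sub_one_lt_self_mul_tanh (by positivity : 0 < κ * a / 2)
  have hκ' : κ = 2 / a * (κ * a / 2) := by field_simp
  calc κ / tanh (κ * a / 2) - 2 / a
      = 2 / a * ((κ * a / 2) / tanh (κ * a / 2) - 1) := by
        nth_rewrite 1 [hκ']; ring
    _ < 2 / a * ((κ * a / 2) * tanh (κ * a / 2)) := by gcongr
    _ = κ * tanh (κ * a / 2) := by rw [← mul_assoc, ← hκ']

theorem monotoneOn_mul_tanh_mul_div_two {a : ℝ} (ha : 0 ≤ a) :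
    MonotoneOn (fun κ => κ * tanh (κ * a / 2)) (Ici 0) := fun x hx y _ hxy => by
  have hx' : (0 : ℝ) ≤ x := hx
  have : tanh (x * a / 2) ≤ tanh (y * a / 2) := tanh_strictMono.monotone (by gcongr)
  exact mul_le_mul hxy this (tanh_nonneg (by positivity)) (hx'.trans hxy)

theorem stmt10_general (a l ν η : ℝ) (ha : 0 < a)
    (hν : 0 < ν) (hνsol : ν * Real.tanh (ν * a / 2) = l)
    (hη : 0 < η) (hηsol : η / Real.tanh (η * a / 2) - 2 / a = l) :
    ν < η := by
  have hlt : ν * tanh (ν * a / 2) < η * tanh (η * a / 2) := by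
    rw [hνsol, ← hηsol]
    exact div_tanh_sub_lt_mul_tanh ha hη
  exact (monotoneOn_mul_tanh_mul_div_two ha.le).reflect_lt hν.le hη.le hlt

theorem stmt10 (a l ν η : ℝ) (ha : 0 < a) (hl : 0 < l)
    (hν : 0 < ν) (hνsol : ν * Real.tanh (ν * a / 2) = l)
    (hη : 0 < η) (hηsol : η / Real.tanh (η * a / 2) - 2 / a = l) :
    ν < η :=
  stmt10_general a l ν η ha hν hνsol hη hηsol
end

section
/- Let a > 0 and consider the 2×2 real symmetric matrix M(κ) defined by M(κ) = −κ·Y·X⁻¹, where X = [[1,1],[e^{−κa}, e^{κa}]] and Y = [[1,−1],[−e^{−κa}, e^{κa}]]. Then for κ > 0, M(κ) = Q·D(κ)·Q, where Q = (1/√2)·[[1,1],[1,−1]] and D(κ) = diag(−κ·tanh(κa/2), −κ/tanh(κa/2)). In particular the eigenvalues of M(κ) are −κ·tanh(κa/2) and −κ/tanh(κa/2). -/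
open Real Matrix

theorem stmt11 (a κ : ℝ) (ha : 0 < a) (hκ : 0 < κ) :
    let X : Matrix (Fin 2) (Fin 2) ℝ := !![1, 1; Real.exp (-(κ * a)), Real.exp (κ * a)]
    let Y : Matrix (Fin 2) (Fin 2) ℝ := !![1, -1; -Real.exp (-(κ * a)), Real.exp (κ * a)]
    let M : Matrix (Fin 2) (Fin 2) ℝ := (-κ) • (Y * X⁻¹)
    let Q : Matrix (Fin 2) (Fin 2) ℝ := (1 / Real.sqrt 2) • !![1, 1; 1, -1]
    let D : Matrix (Fin 2) (Fin 2) ℝ :=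
      Matrix.diagonal ![-κ * Real.tanh (κ * a / 2), -κ / Real.tanh (κ * a / 2)]
    M = Q * D * Q ∧
    (∀ μ : ℝ, (M - μ • (1 : Matrix (Fin 2) (Fin 2) ℝ)).det = 0 ↔
      μ = -κ * Real.tanh (κ * a / 2) ∨ μ = -κ / Real.tanh (κ * a / 2)) := by
  intro X Y M Q D
  set u := Real.exp (κ * a / 2) with hu
  have hu1 : 1 < u := by rw [hu, Real.one_lt_exp_iff]; positivity
  have hu0 : (0:ℝ) < u := lt_trans one_pos hu1
  have hune : u ≠ 0 := ne_of_gt hu0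
  have hsq : 1 < u ^ 2 := by nlinarith
  have h4 : 1 < u ^ 4 := by nlinarith
  have hum1 : u ^ 2 - 1 ≠ 0 := by nlinarith
  have hup1 : u ^ 2 + 1 ≠ 0 := by positivity
  have he1 : Real.exp (κ * a) = u ^ 2 := by rw [hu, ← Real.exp_nat_mul]; ring_nf
  have he2 : Real.exp (-(κ * a)) = (u ^ 2)⁻¹ := by rw [Real.exp_neg, he1]
  have ht : Real.tanh (κ * a / 2) = (u ^ 2 - 1) / (u ^ 2 + 1) := by
    rw [Real.tanh_eq_sinh_div_cosh, Real.sinh_eq, Real.cosh_eq, Real.exp_neg, ← hu]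
    field_simp
  have htne : Real.tanh (κ * a / 2) ≠ 0 := by
    rw [ht]; exact div_ne_zero hum1 hup1
  have hdne : u ^ 2 - (u ^ 2)⁻¹ ≠ 0 := by
    have key : (u ^ 2 - (u ^ 2)⁻¹) * u ^ 2 = (u ^ 2 - 1) * (u ^ 2 + 1) := by field_simp; ring
    intro h
    rw [h, zero_mul] at key
    exact mul_ne_zero hum1 hup1 key.symm
  have hA : -u ^ 2 + u ^ 6 ≠ 0 := by
    have h6 : (0:ℝ) < -u ^ 2 + u ^ 6 := by nlinarith
    exact ne_of_gt h6
  have hB : -1 + u ^ 4 ≠ 0 := by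
    have h6 : (0:ℝ) < -1 + u ^ 4 := by nlinarith
    exact ne_of_gt h6
  have h41 : u ^ 4 - 1 ≠ 0 := by
    have h6 : (0:ℝ) < u ^ 4 - 1 := by nlinarith
    exact ne_of_gt h6
  have hrw : (u ^ 2 - (u ^ 2)⁻¹)⁻¹ = u ^ 2 / (u ^ 4 - 1) := by
    rw [eq_div_iff h41, inv_mul_eq_div, div_eq_iff hdne]; field_simp
  have hdet : X.det = u ^ 2 - (u ^ 2)⁻¹ := by
    rw [show X = !![1, 1; Real.exp (-(κ * a)), Real.exp (κ * a)] from rfl,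
      Matrix.det_fin_two_of, he1, he2]; ring
  have hinv : X⁻¹ = (u ^ 2 - (u ^ 2)⁻¹)⁻¹ • !![u ^ 2, -1; -(u ^ 2)⁻¹, 1] := by
    rw [Matrix.inv_def, hdet, Ring.inverse_eq_inv',
      show X = !![1, 1; Real.exp (-(κ * a)), Real.exp (κ * a)] from rfl,
      Matrix.adjugate_fin_two_of, he1, he2]
  have hs2 : Real.sqrt 2 * Real.sqrt 2 = 2 := Real.mul_self_sqrt (by norm_num)
  have hs2ne : Real.sqrt 2 ≠ 0 := by positivity
  have hD : D = !![-κ * Real.tanh (κ * a / 2), 0; 0, -κ / Real.tanh (κ * a / 2)] := by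
    ext i j
    fin_cases i <;> fin_cases j <;> simp [D, Matrix.diagonal]
  have hhalf : (1 / Real.sqrt 2 : ℝ) * (1 / Real.sqrt 2) = 1 / 2 := by
    rw [div_mul_div_comm, hs2]; norm_num
  have hYX : Y * X⁻¹ =
      (u ^ 2 - (u ^ 2)⁻¹)⁻¹ • !![u ^ 2 + (u ^ 2)⁻¹, -2; -2, u ^ 2 + (u ^ 2)⁻¹] := by
    rw [hinv, Matrix.mul_smul]
    congr 1
    ext i j
    fin_cases i <;> fin_cases j <;>
      simp [Y, Matrix.mul_apply, Fin.sum_univ_two, he1, he2] <;>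
      (try field_simp) <;> (try ring)
  have hQDQ : Q * D * Q = (1 / 2 : ℝ) •
      !![(-κ * Real.tanh (κ * a / 2)) + (-κ / Real.tanh (κ * a / 2)),
         (-κ * Real.tanh (κ * a / 2)) - (-κ / Real.tanh (κ * a / 2));
         (-κ * Real.tanh (κ * a / 2)) - (-κ / Real.tanh (κ * a / 2)),
         (-κ * Real.tanh (κ * a / 2)) + (-κ / Real.tanh (κ * a / 2))] := by
    rw [hD, show Q = (1 / Real.sqrt 2 : ℝ) • !![1, 1; 1, -1] from rfl,
      Matrix.smul_mul, Matrix.mul_smul, Matrix.smul_mul, smul_smul, hhalf]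
    congr 1
    ext i j
    fin_cases i <;> fin_cases j <;>
      simp [Matrix.mul_apply, Fin.sum_univ_two] <;> ring
  have hM : M = Q * D * Q := by
    rw [hQDQ, show M = (-κ) • (Y * X⁻¹) from rfl, hYX, hrw, smul_smul]
    ext i j
    fin_cases i <;> fin_cases j <;>
      simp only [Matrix.smul_apply, Matrix.of_apply, Matrix.cons_val', Matrix.cons_val_zero,
        Matrix.cons_val_one, Matrix.head_cons, Matrix.head_fin_const, Matrix.empty_val',
        Matrix.cons_val_fin_one, smul_eq_mul, ht, Fin.zero_eta, Fin.mk_one] <;>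
      field_simp <;> ring
  refine ⟨hM, fun μ => ?_⟩
  have hQ2 : Q * Q = 1 := by
    ext i j
    fin_cases i <;> fin_cases j <;>
      simp [Q, Matrix.mul_apply, Fin.sum_univ_two] <;> field_simp <;> nlinarith [hs2]
  have hMsub : M - μ • (1 : Matrix (Fin 2) (Fin 2) ℝ) = Q * (D - μ • 1) * Q := by
    rw [Matrix.mul_sub, Matrix.sub_mul, ← hM, mul_smul_comm μ Q 1, mul_one,
      smul_mul_assoc μ Q Q, hQ2]
  have hdetQ : Q.det = -1 := by
    rw [show Q = (1 / Real.sqrt 2 : ℝ) • !![1, 1; 1, -1] from rfl]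
    rw [Matrix.det_smul]
    simp [Matrix.det_fin_two_of]
    field_simp
    nlinarith [hs2]
  have hDsub : D - μ • (1 : Matrix (Fin 2) (Fin 2) ℝ) =
      Matrix.diagonal ![-κ * Real.tanh (κ * a / 2) - μ, -κ / Real.tanh (κ * a / 2) - μ] := by
    ext i j
    fin_cases i <;> fin_cases j <;> simp [D, Matrix.diagonal]
  rw [hMsub, Matrix.det_mul, Matrix.det_mul, hdetQ, hDsub, Matrix.det_diagonal,
    Fin.prod_univ_two]
  simp only [Matrix.cons_val_zero, Matrix.cons_val_one, Matrix.head_cons]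
  constructor
  · intro h
    have h' : (-κ * Real.tanh (κ * a / 2) - μ) * (-κ / Real.tanh (κ * a / 2) - μ) = 0 := by
      linear_combination h
    rcases mul_eq_zero.mp h' with h1 | h1
    · left; linarith
    · right; linarith
  · rintro (h | h) <;> rw [h] <;> ring
end

section
/- Let a > 0 and γ < 0. Define the 4×4 real symmetric matrices L = −(1/γ)·[[1,1,0,0],[1,1,0,0],[0,0,1,1],[0,0,1,1]] and M₀ = (1/a)·[[0,0,0,0],[0,−1,1,0],[0,1,−1,0],[0,0,0,0]]. Then the eigenvalues of L + M₀ are 0, (−a−γ+√(a²+γ²))/(aγ), −(a+γ+√(a²+γ²))/(aγ), and −2/γ, and exactly two of these eigenvalues are positive, namely −2/γ and −(a+γ+√(a²+γ²))/(aγ). -/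
open Matrix

noncomputable def Lmat (γ : ℝ) : Matrix (Fin 4) (Fin 4) ℝ :=
  (-(1 / γ)) • !![1, 1, 0, 0; 1, 1, 0, 0; 0, 0, 1, 1; 0, 0, 1, 1]

noncomputable def M0mat (a : ℝ) : Matrix (Fin 4) (Fin 4) ℝ :=
  (1 / a) • !![0, 0, 0, 0; 0, -1, 1, 0; 0, 1, -1, 0; 0, 0, 0, 0]

/-! Expanding along rows, the characteristic determinant factors as
`μ (μ + 2/γ) (μ² + 2(1/a + 1/γ) μ + 2/(aγ))`, and the quadratic factor has discriminant
proportional to `a² + γ²`. Since `aγ < 0` we have `(a + γ)² < a² + γ²`, i.e. `|a + γ| < √(a² + γ²)`,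
which fixes the signs of both roots of the quadratic. -/

theorem det_Lmat_add_M0mat_sub_smul_one (a γ μ : ℝ) :
    (Lmat γ + M0mat a - μ • (1 : Matrix (Fin 4) (Fin 4) ℝ)).det =
      μ * (μ + 2 / γ) * (μ ^ 2 + 2 * (1 / a + 1 / γ) * μ + 2 / (a * γ)) := by
  simp [Matrix.det_succ_row_zero, Fin.sum_univ_succ, Fin.succAbove, Lmat, M0mat, Matrix.one_apply]
  ring

theorem quadratic_eq_mul_sub_roots {a γ s : ℝ} (ha : a ≠ 0) (hγ : γ ≠ 0)
    (hs : s ^ 2 = a ^ 2 + γ ^ 2) (μ : ℝ) :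
    μ ^ 2 + 2 * (1 / a + 1 / γ) * μ + 2 / (a * γ) =
      (μ - (-a - γ + s) / (a * γ)) * (μ - -((a + γ + s) / (a * γ))) := by
  field_simp
  linear_combination hs

theorem abs_add_lt_sqrt_sq_add_sq {a γ : ℝ} (h : a * γ < 0) :
    |a + γ| < √(a ^ 2 + γ ^ 2) := by
  rw [Real.lt_sqrt (abs_nonneg _), sq_abs]
  nlinarith

theorem stmt16 (a γ : ℝ) (ha : 0 < a) (hγ : γ < 0) :
    (∀ μ : ℝ, ((Lmat γ + M0mat a) - μ • (1 : Matrix (Fin 4) (Fin 4) ℝ)).det = 0 ↔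
      (μ = 0 ∨ μ = (-a - γ + Real.sqrt (a ^ 2 + γ ^ 2)) / (a * γ) ∨
       μ = -((a + γ + Real.sqrt (a ^ 2 + γ ^ 2)) / (a * γ)) ∨ μ = -(2 / γ))) ∧
    0 < -(2 / γ) ∧ 0 < -((a + γ + Real.sqrt (a ^ 2 + γ ^ 2)) / (a * γ)) ∧
    (-a - γ + Real.sqrt (a ^ 2 + γ ^ 2)) / (a * γ) ≤ 0 := by
  have haγ : a * γ < 0 := mul_neg_of_pos_of_neg ha hγ
  have hs : √(a ^ 2 + γ ^ 2) ^ 2 = a ^ 2 + γ ^ 2 := Real.sq_sqrt (by positivity)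
  have hsum := abs_lt.mp (abs_add_lt_sqrt_sq_add_sq haγ)
  refine ⟨fun μ => ?_, ?_, ?_, ?_⟩
  · rw [det_Lmat_add_M0mat_sub_smul_one, quadratic_eq_mul_sub_roots ha.ne' hγ.ne hs]
    simp only [mul_eq_zero, sub_eq_zero, add_eq_zero_iff_eq_neg]
    tauto
  · exact neg_pos.mpr (div_neg_of_pos_of_neg two_pos hγ)
  · exact neg_pos.mpr (div_neg_of_pos_of_neg (by linarith) haγ)
  · exact (div_neg_of_pos_of_neg (by linarith) haγ).le
end
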